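/- arXiv:2409.00365 — 2 statements merged into one kernel-verified Lean document; each statement's English description precedes it below -/
import Mathlib

section
/- Let N ≥ 1, C > 0, and let h : (0,∞) → ℝ be a nonnegative function satisfying h(R) ≤ (4/R²) · h(2R) for all R > 0 and h(R) ≤ C · R^{N−1} for all R > 0. Then h(R) = 0 for all R > 0. -/
theorem stmt_1 (N : ℕ) (hN : 1 ≤ N) (C : ℝ) (hC : 0 < C) (h : ℝ → ℝ)
    (hnonneg : ∀ R : ℝ, 0 < R → 0 ≤ h R)
    (hiter : ∀ R : ℝ, 0 < R → h R ≤ 4 / R ^ 2 * h (2 * R))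
    (hgrowth : ∀ R : ℝ, 0 < R → h R ≤ C * R ^ (N - 1)) :
    ∀ R : ℝ, 0 < R → h R = 0 := by
  set M : ℝ := 2 ^ (N + 2) with hM
  have hM1 : (1:ℝ) ≤ M := one_le_pow₀ (by norm_num)
  have hMpos : (0:ℝ) < M := lt_of_lt_of_le one_pos hM1
  -- step 1: for R ≥ M, h R ≤ (1/2)^k * (C * R^(N-1))
  have key : ∀ k : ℕ, ∀ R : ℝ, M ≤ R → h R ≤ (1/2)^k * (C * R ^ (N - 1)) := by
    intro k
    induction k with
    | zero => intro R hR; simpa using hgrowth R (lt_of_lt_of_le hMpos hR)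
    | succ k ih =>
      intro R hR
      have hRpos : 0 < R := lt_of_lt_of_le hMpos hR
      have hR1 : (1:ℝ) ≤ R := le_trans hM1 hR
      have h2R : M ≤ 2 * R := by nlinarith
      have step1 : h R ≤ 4 / R ^ 2 * h (2 * R) := hiter R hRpos
      have step2 : h (2 * R) ≤ (1/2)^k * (C * (2 * R) ^ (N - 1)) := ih (2 * R) h2R
      have hfac : (0:ℝ) ≤ 4 / R ^ 2 := by positivity
      have step3 : h R ≤ 4 / R ^ 2 * ((1/2)^k * (C * (2 * R) ^ (N - 1))) :=
        le_trans step1 (mul_le_mul_of_nonneg_left step2 hfac)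
      refine le_trans step3 ?_
      have hexp : (2 * R) ^ (N - 1) = 2 ^ (N - 1) * R ^ (N - 1) := mul_pow 2 R (N - 1)
      rw [hexp]
      -- reduce to: 4 / R^2 * 2^(N-1) ≤ 1/2
      have hR2 : M ≤ R ^ 2 := by nlinarith
      have hkey : 4 / R ^ 2 * 2 ^ (N - 1) ≤ 1 / 2 := by
        have h1 : 4 / R ^ 2 ≤ 4 / M := by
          apply div_le_div_of_nonneg_left (by norm_num) hMpos hR2
        have h2 : (4:ℝ) / M * 2 ^ (N - 1) = 1 / 2 := by
          rw [hM]
          have : N + 2 = (N - 1) + 3 := by omega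
          rw [this, pow_add]
          field_simp
          ring
        calc 4 / R ^ 2 * 2 ^ (N - 1) ≤ 4 / M * 2 ^ (N - 1) := by
              apply mul_le_mul_of_nonneg_right h1 (by positivity)
          _ = 1 / 2 := h2
      have hrest : (0:ℝ) ≤ (1/2)^k * (C * R ^ (N-1)) := by positivity
      calc 4 / R ^ 2 * ((1/2)^k * (C * (2 ^ (N-1) * R ^ (N-1))))
          = (4 / R ^ 2 * 2 ^ (N-1)) * ((1/2)^k * (C * R ^ (N-1))) := by ring
        _ ≤ (1/2) * ((1/2)^k * (C * R ^ (N-1))) :=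
            mul_le_mul_of_nonneg_right hkey hrest
        _ = (1/2)^(k+1) * (C * R ^ (N-1)) := by ring
  -- step 2: for R ≥ M, h R = 0
  have hzero : ∀ R : ℝ, M ≤ R → h R = 0 := by
    intro R hR
    have hRpos : 0 < R := lt_of_lt_of_le hMpos hR
    have hlim : Filter.Tendsto (fun k : ℕ => (1/2:ℝ)^k * (C * R ^ (N-1)))
        Filter.atTop (nhds 0) := by
      have := (tendsto_pow_atTop_nhds_zero_of_lt_one (by norm_num : (0:ℝ) ≤ 1/2)
        (by norm_num : (1/2:ℝ) < 1)).mul_const (C * R ^ (N-1))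
      simpa using this
    have : h R ≤ 0 :=
      ge_of_tendsto hlim (Filter.Eventually.of_forall fun k => key k R hR)
    exact le_antisymm this (hnonneg R hRpos)
  -- step 3: descent
  have descent : ∀ k : ℕ, ∀ R : ℝ, 0 < R → h (2 ^ k * R) = 0 → h R = 0 := by
    intro k
    induction k with
    | zero => intro R _ hz; simpa using hz
    | succ k ih =>
      intro R hRpos hz
      have : (2:ℝ) ^ (k+1) * R = 2 ^ k * (2 * R) := by ring
      rw [this] at hz
      have h2R : h (2 * R) = 0 := ih (2 * R) (by linarith) hz
      have := hiter R hRpos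
      rw [h2R, mul_zero] at this
      exact le_antisymm this (hnonneg R hRpos)
  intro R hRpos
  obtain ⟨k, hk⟩ := pow_unbounded_of_one_lt (M / R) (by norm_num : (1:ℝ) < 2)
  have hkR : M ≤ 2 ^ k * R := by
    rw [div_lt_iff₀ hRpos] at hk
    linarith
  exact descent k R hRpos (hzero _ hkR)
end

section
/- Let f : (0,∞) → ℝ be continuous, positive, and nonincreasing, and suppose v : [0,∞) → ℝ is continuous, twice continuously differentiable on (0,∞), satisfies −v''(t) = f(v(t)) for t > 0, v(0) = 0, v(t) > 0 and v'(t) > 0 for all t > 0, and v(t) → ∞ as t → ∞. Then ∫₁^∞ f(t) dt < ∞. -/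
/-! Multiplying `-v'' = f(v)` by `v'` shows that the energy `(v')² / 2 + ∫₁^v f` is constant
in `t`. As `(v')² ≥ 0`, the integrals `∫₁^{v(t)} f` stay bounded by that constant; since `f > 0`
and `v(t) → ∞`, this is exactly the integrability of `f` on `(1, ∞)`. -/

open MeasureTheory Set Filter

theorem integrableOn_Ioi_of_nonneg_of_intervalIntegral_le {ι : Type*} {l : Filter ι}
    [l.NeBot] [l.IsCountablyGenerated] {b : ι → ℝ} {a M : ℝ} {f : ℝ → ℝ}
    (hf : ∀ x, a ≤ x → 0 ≤ f x) (hfi : ∀ i, IntegrableOn f (Ioc a (b i)))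
    (hb : Tendsto b l atTop) (hM : ∀ᶠ i in l, ∫ x in a..b i, f x ≤ M) :
    IntegrableOn f (Ioi a) := by
  refine integrableOn_Ioi_of_intervalIntegral_norm_bounded M a hfi hb ?_
  filter_upwards [hM, hb.eventually (eventually_ge_atTop a)] with i hi hai
  refine le_of_eq_of_le (intervalIntegral.integral_congr fun x hx => ?_) hi
  rw [uIcc_of_le hai] at hx
  exact Real.norm_of_nonneg (hf x hx.1)

noncomputable def odeEnergy (f v : ℝ → ℝ) (c t : ℝ) : ℝ :=
  deriv v t ^ 2 / 2 + ∫ x in c..v t, f x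

theorem hasDerivAt_odeEnergy {f v : ℝ → ℝ} {c t : ℝ} (hfc : ContinuousOn f (Ioi 0))
    (hc : 0 < c) (hvt : 0 < v t) (hv : DifferentiableAt ℝ v t)
    (hv' : DifferentiableAt ℝ (deriv v) t) :
    HasDerivAt (odeEnergy f v c) (deriv v t * (deriv (deriv v) t + f (v t))) t := by
  have hfi : IntervalIntegrable f volume c (v t) :=
    (hfc.mono fun x hx => (lt_min hc hvt).trans_le hx.1).intervalIntegrable
  have hF : HasDerivAt (fun u => ∫ x in c..u, f x) (f (v t)) (v t) :=
    intervalIntegral.integral_hasDerivAt_right hfi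
      (hfc.stronglyMeasurableAtFilter isOpen_Ioi _ hvt) (hfc.continuousAt (Ioi_mem_nhds hvt))
  have hK : HasDerivAt (fun s => deriv v s ^ 2 / 2) (deriv v t * deriv (deriv v) t) t :=
    ((hv'.hasDerivAt.fun_pow 2).div_const 2).congr_deriv (by push_cast; ring)
  exact (hK.add (hF.comp t hv.hasDerivAt)).congr_deriv (by ring)

theorem odeEnergy_eq {f v : ℝ → ℝ} {c s t : ℝ} (hfc : ContinuousOn f (Ioi 0)) (hc : 0 < c)
    (hvC2 : ContDiffOn ℝ 2 v (Ioi 0)) (hode : ∀ t, 0 < t → -deriv (deriv v) t = f (v t))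
    (hvpos : ∀ t, 0 < t → 0 < v t) (hs : 0 < s) (ht : 0 < t) :
    odeEnergy f v c s = odeEnergy f v c t := by
  have hv : DifferentiableOn ℝ v (Ioi 0) := hvC2.differentiableOn (by norm_num)
  have hv' : DifferentiableOn ℝ (deriv v) (Ioi 0) :=
    (hvC2.deriv_of_isOpen (m := 1) isOpen_Ioi (by norm_num)).differentiableOn (by norm_num)
  have hE : ∀ t ∈ Ioi (0 : ℝ), HasDerivAt (odeEnergy f v c) 0 t := fun t ht => by
    simpa [← hode t ht] using hasDerivAt_odeEnergy hfc hc (hvpos t ht)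
      (hv.differentiableAt (Ioi_mem_nhds ht)) (hv'.differentiableAt (Ioi_mem_nhds ht))
  exact isOpen_Ioi.is_const_of_deriv_eq_zero isPreconnected_Ioi
    (fun t ht => (hE t ht).differentiableAt.differentiableWithinAt)
    (fun t ht => (hE t ht).deriv) hs ht

theorem stmt_10_general (f : ℝ → ℝ) (hfc : ContinuousOn f (Set.Ioi 0))
    (hfpos : ∀ t : ℝ, 0 < t → 0 < f t)
    (v : ℝ → ℝ)
    (hvC2 : ContDiffOn ℝ 2 v (Set.Ioi 0))
    (hode : ∀ t : ℝ, 0 < t → -(deriv (deriv v) t) = f (v t))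
    (hvpos : ∀ t : ℝ, 0 < t → 0 < v t)
    (hvtop : Filter.Tendsto v Filter.atTop Filter.atTop) :
    MeasureTheory.IntegrableOn f (Set.Ioi 1) := by
  refine integrableOn_Ioi_of_nonneg_of_intervalIntegral_le (M := odeEnergy f v 1 1)
    (fun x hx => (hfpos x (one_pos.trans_le hx)).le)
    (fun i => ((hfc.mono fun x hx => one_pos.trans_le hx.1).integrableOn_Icc).mono_set
      Ioc_subset_Icc_self) hvtop ?_
  filter_upwards [eventually_gt_atTop 0] with t ht
  have hE := odeEnergy_eq (c := 1) hfc one_pos hvC2 hode hvpos ht one_pos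
  unfold odeEnergy at hE ⊢
  linarith [sq_nonneg (deriv v t)]

theorem stmt_10 (f : ℝ → ℝ) (hfc : ContinuousOn f (Set.Ioi 0))
    (hfpos : ∀ t : ℝ, 0 < t → 0 < f t)
    (hfanti : AntitoneOn f (Set.Ioi 0))
    (v : ℝ → ℝ) (hvc : ContinuousOn v (Set.Ici 0))
    (hvC2 : ContDiffOn ℝ 2 v (Set.Ioi 0))
    (hode : ∀ t : ℝ, 0 < t → -(deriv (deriv v) t) = f (v t))
    (hv0 : v 0 = 0)
    (hvpos : ∀ t : ℝ, 0 < t → 0 < v t)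
    (hv' : ∀ t : ℝ, 0 < t → 0 < deriv v t)
    (hvtop : Filter.Tendsto v Filter.atTop Filter.atTop) :
    MeasureTheory.IntegrableOn f (Set.Ioi 1) :=
  stmt_10_general f hfc hfpos v hvC2 hode hvpos hvtop
end
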